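/- Let G be an abelian subgroup of the Pauli group 𝒫_n on n qubits with −I₂^{⊗n} ∉ G, and for M₀ ∈ M_{2^n}(ℂ) set 𝒱_{M₀} := span_ℂ{g M₀ g : g ∈ G}. Then the linear span, over all M₀ for which 𝒱_{M₀} contains the identity and is closed under adjoints, of the subspaces 𝒱_{M₀}, equals span_ℂ((𝒫_n \ N(G)) ∪ {I₂^{⊗n}}), where N(G) = {h ∈ 𝒫_n : h G h⁻¹ = G} is the normalizer of G in 𝒫_n. -/

import Mathlib

open Matrix

/-- The four Pauli matrices: `σ₀ = I₂`, `σ₁ = Z`, `σ₂ = X`, `σ₃ = Y`. -/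
noncomputable def pauli : Fin 4 → Matrix (Fin 2) (Fin 2) ℂ
  | 0 => 1
  | 1 => !![1, 0; 0, -1]
  | 2 => !![0, 1; 1, 0]
  | 3 => !![0, Complex.I; -Complex.I, 0]

/-- The Pauli word `σ_{j₁} ⊗ ⋯ ⊗ σ_{jₙ} ∈ M_{2^n}(ℂ)`, as a matrix indexed by
`{0,1}^n`, with entry `∏ i, (σ_{j i}) (a i) (b i)`. -/
noncomputable def pauliWord {n : ℕ} (j : Fin n → Fin 4) :
    Matrix (Fin n → Fin 2) (Fin n → Fin 2) ℂ :=
  Matrix.of fun a b => ∏ i, pauli (j i) (a i) (b i)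

/-- `Z_r`: the Pauli word with `Z` in the `r`-th position and `I₂` elsewhere. -/
noncomputable def Zword {n : ℕ} (r : Fin n) :
    Matrix (Fin n → Fin 2) (Fin n → Fin 2) ℂ :=
  pauliWord (fun i => if i = r then 1 else 0)

/-- The subgroup (as a multiplicative submonoid: the generators are involutions,
so the generated submonoid is the generated subgroup) `⟨Z₁, …, Z_s⟩` of `M_{2^n}(ℂ)`. -/
noncomputable def ZSubgroup (n s : ℕ) :
    Submonoid (Matrix (Fin n → Fin 2) (Fin n → Fin 2) ℂ) :=
  Submonoid.closure {A | ∃ r : Fin n, (r : ℕ) < s ∧ A = Zword r}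

/-- The Pauli group `𝒫_n` on `n` qubits, as a set of matrices. -/
noncomputable def pauliGroupSet (n : ℕ) :
    Set (Matrix (Fin n → Fin 2) (Fin n → Fin 2) ℂ) :=
  {A | ∃ c ∈ ({1, -1, Complex.I, -Complex.I} : Set ℂ),
    ∃ j : Fin n → Fin 4, A = c • pauliWord j}

/-!
Every element of `G` is `±` a Pauli word: a phase `±i` would put `g² = -1` into `G`. So `G` is a
finite group of Hermitian involutions, each commuting or anticommuting with every Pauli word `w`;
and `w` commutes with all of `G` exactly when it normalizes `G`, since otherwise `w g w⁻¹ = -g`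
would put `-1` into `G`.

`≤`: the twirl `E M = |G|⁻¹ ∑ g M g⁻¹` is constant on the `G`-conjugates of `M₀` and fixes `1`,
so `1 ∈ 𝒱_{M₀}` forces `E M₀ ∈ ℂ 1`, and every `g M₀ g` lies in `range (id - E) + ℂ 1`. On Pauli
words, `id - E` kills those in `N(G)` and maps any other one into its own span.

`≥`: if `g w g = -w` for some `g ∈ G`, then `𝒱_{1 + w}` is spanned by the Hermitian matrices
`1 ± w`, so it is an operator system containing `w`; and `𝒱_1 = ℂ 1`.
-/


namespace Matrix

variable {ι m p q R : Type*} [Fintype ι] [CommSemiring R]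

def piKronecker (A : ι → Matrix m p R) : Matrix (ι → m) (ι → p) R :=
  of fun a b => ∏ i, A i (a i) (b i)

@[simp]
theorem piKronecker_apply (A : ι → Matrix m p R) (a : ι → m) (b : ι → p) :
    piKronecker A a b = ∏ i, A i (a i) (b i) := rfl

theorem piKronecker_mul [DecidableEq ι] [Fintype p] (A : ι → Matrix m p R)
    (B : ι → Matrix p q R) : piKronecker A * piKronecker B = piKronecker fun i => A i * B i := by
  ext a b
  simp only [mul_apply, piKronecker_apply, ← Finset.prod_mul_distrib, Fintype.prod_sum]

theorem piKronecker_one [DecidableEq m] :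
    piKronecker (fun _ : ι => (1 : Matrix m m R)) = 1 := by
  ext a b
  by_cases h : a = b
  · subst h; simp
  · obtain ⟨i, hi⟩ := Function.ne_iff.mp h
    rw [one_apply_ne h]
    exact Finset.prod_eq_zero (Finset.mem_univ i) (one_apply_ne hi)

theorem piKronecker_smul (c : ι → R) (A : ι → Matrix m p R) :
    piKronecker (fun i => c i • A i) = (∏ i, c i) • piKronecker A := by
  ext a b
  simp [Finset.prod_mul_distrib]

theorem conjTranspose_piKronecker [StarRing R] (A : ι → Matrix m p R) :
    (piKronecker A)ᴴ = piKronecker fun i => (A i)ᴴ := by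
  ext a b
  simp [star_prod]

theorem single_one_eq_piKronecker [DecidableEq m] [DecidableEq p] (a : ι → m) (b : ι → p) :
    single a b (1 : R) = piKronecker fun i => single (a i) (b i) 1 := by
  ext x y
  simp only [single_apply, piKronecker_apply, Fintype.prod_boole, funext_iff, forall_and]

theorem piKronecker_sum [DecidableEq ι] {κ : Type*} [Fintype κ] (c : ι → κ → R)
    (B : κ → Matrix m p R) :
    piKronecker (fun i => ∑ k, c i k • B k) =
      ∑ f : ι → κ, (∏ i, c i (f i)) • piKronecker fun i => B (f i) := by
  ext a b
  simp [sum_apply, Fintype.prod_sum, Finset.prod_mul_distrib]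

theorem span_range_piKronecker [DecidableEq ι] [Fintype m] [Fintype p] [DecidableEq m]
    [DecidableEq p] {κ : Type*} [Fintype κ] {B : κ → Matrix m p R}
    (hB : Submodule.span R (Set.range B) = ⊤) :
    Submodule.span R (Set.range fun f : ι → κ => piKronecker fun i => B (f i)) = ⊤ := by
  rw [eq_top_iff, ← (stdBasis R (ι → m) (ι → p)).span_eq, Submodule.span_le]
  rintro _ ⟨⟨a, b⟩, rfl⟩
  have hsingle (x : m) (y : p) : ∃ c : κ → R, ∑ k, c k • B k = single x y 1 :=
    (Submodule.mem_span_range_iff_exists_fun R).mp (hB ▸ Submodule.mem_top)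
  choose c hc using hsingle
  rw [stdBasis_eq_single, single_one_eq_piKronecker]
  simp only [← hc, piKronecker_sum]
  exact Submodule.sum_mem _ fun f _ => Submodule.smul_mem _ _ (Submodule.subset_span ⟨f, rfl⟩)

end Matrix

section Pauli

theorem pauli_mul_self (p : Fin 4) : pauli p * pauli p = 1 := by
  fin_cases p <;> ext a b <;> fin_cases a <;> fin_cases b <;>
    simp [pauli, mul_apply, Fin.sum_univ_two]

theorem pauli_isHermitian (p : Fin 4) : (pauli p).IsHermitian := by
  fin_cases p <;> ext a b <;> fin_cases a <;> fin_cases b <;> simp [pauli]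

theorem pauli_mul_comm (p q : Fin 4) :
    pauli p * pauli q = (if p = 0 ∨ q = 0 ∨ p = q then 1 else -1 : ℂ) • (pauli q * pauli p) := by
  fin_cases p <;> fin_cases q <;> ext a b <;> fin_cases a <;> fin_cases b <;>
    simp [pauli, mul_apply, Fin.sum_univ_two]

theorem span_range_pauli : Submodule.span ℂ (Set.range pauli) = ⊤ := by
  refine eq_top_iff.mpr fun M _ => (Submodule.mem_span_range_iff_exists_fun ℂ).mpr ?_
  refine ⟨![(M 0 0 + M 1 1) / 2, (M 0 0 - M 1 1) / 2, (M 0 1 + M 1 0) / 2,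
    (M 1 0 - M 0 1) * Complex.I / 2], ?_⟩
  ext a b
  fin_cases a <;> fin_cases b <;> simp [pauli, Fin.sum_univ_four] <;> ring_nf <;> simp <;> ring

end Pauli

section PauliWord

variable {n : ℕ}

theorem pauliWord_eq_piKronecker (j : Fin n → Fin 4) :
    pauliWord j = piKronecker fun i => pauli (j i) := rfl

theorem pauliWord_mul_self (j : Fin n → Fin 4) : pauliWord j * pauliWord j = 1 := by
  simp only [pauliWord_eq_piKronecker, piKronecker_mul, pauli_mul_self, piKronecker_one]

theorem pauliWord_isHermitian (j : Fin n → Fin 4) : (pauliWord j).IsHermitian := by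
  simp only [IsHermitian, pauliWord_eq_piKronecker, conjTranspose_piKronecker,
    (pauli_isHermitian _).eq]

theorem pauliWord_mul_comm (j k : Fin n → Fin 4) :
    pauliWord j * pauliWord k =
      (∏ i, if j i = 0 ∨ k i = 0 ∨ j i = k i then 1 else -1 : ℂ) •
        (pauliWord k * pauliWord j) := by
  simp only [pauliWord_eq_piKronecker, piKronecker_mul, pauli_mul_comm (j _), piKronecker_smul]

theorem pauliWord_commute_or_anticommute (j k : Fin n → Fin 4) :
    Commute (pauliWord j) (pauliWord k) ∨
      pauliWord j * pauliWord k = -(pauliWord k * pauliWord j) := by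
  rw [Commute, SemiconjBy, pauliWord_mul_comm]
  set s : ℂ := ∏ i, if j i = 0 ∨ k i = 0 ∨ j i = k i then 1 else -1
  have hs : s * s = 1 := by
    rw [← Finset.prod_mul_distrib]
    exact Finset.prod_eq_one fun i _ => by split_ifs <;> norm_num
  rcases mul_self_eq_one_iff.mp hs with h | h <;> simp [h]

theorem span_range_pauliWord : Submodule.span ℂ (Set.range (pauliWord (n := n))) = ⊤ :=
  span_range_piKronecker span_range_pauli

theorem pauliWord_mem_pauliGroupSet (j : Fin n → Fin 4) : pauliWord j ∈ pauliGroupSet n :=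
  ⟨1, by simp, j, (one_smul _ _).symm⟩

theorem isUnit_of_mem_pauliGroupSet {A : Matrix (Fin n → Fin 2) (Fin n → Fin 2) ℂ}
    (hA : A ∈ pauliGroupSet n) : IsUnit A := by
  obtain ⟨c, hc, j, rfl⟩ := hA
  have hc0 : c ≠ 0 := by rcases hc with rfl | rfl | rfl | rfl <;> simp
  refine IsUnit.of_mul_eq_one (c⁻¹ • pauliWord j) ?_
  rw [smul_mul_smul_comm, pauliWord_mul_self, mul_inv_cancel₀ hc0, one_smul]

end PauliWord

section SignedPauliWord

variable {n : ℕ}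

def signedPauliWords (n : ℕ) : Set (Matrix (Fin n → Fin 2) (Fin n → Fin 2) ℂ) :=
  {A | ∃ j, A = pauliWord j ∨ A = -pauliWord j}

variable {A : Matrix (Fin n → Fin 2) (Fin n → Fin 2) ℂ}

theorem mul_self_of_mem_signedPauliWords (hA : A ∈ signedPauliWords n) : A * A = 1 := by
  obtain ⟨j, rfl | rfl⟩ := hA <;> simp [pauliWord_mul_self]

theorem isHermitian_of_mem_signedPauliWords (hA : A ∈ signedPauliWords n) : A.IsHermitian := by
  obtain ⟨j, rfl | rfl⟩ := hA
  exacts [pauliWord_isHermitian j, (pauliWord_isHermitian j).neg]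

theorem commute_or_anticommute_of_mem_signedPauliWords (hA : A ∈ signedPauliWords n)
    (k : Fin n → Fin 4) :
    Commute A (pauliWord k) ∨ A * pauliWord k = -(pauliWord k * A) := by
  obtain ⟨j, rfl | rfl⟩ := hA
  · exact pauliWord_commute_or_anticommute j k
  · rcases pauliWord_commute_or_anticommute j k with h | h
    · exact Or.inl h.neg_left
    · right; simp [h]

theorem signedPauliWords_finite : (signedPauliWords n).Finite := by
  refine ((Set.finite_range pauliWord).union (Set.finite_range fun j => -pauliWord j)).subset ?_
  rintro A ⟨j, rfl | rfl⟩
  exacts [Or.inl ⟨j, rfl⟩, Or.inr ⟨j, rfl⟩]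

end SignedPauliWord

section Twirl

variable {K A : Type*} [Field K] [Ring A] [Algebra K A]

def conjugatesBy (G : Subgroup Aˣ) (M : A) : Set A := {x | ∃ g ∈ G, x = (g : A) * M * ↑g⁻¹}

variable {G : Subgroup Aˣ}

theorem one_mem_and_mem_span_conjugatesBy_one_add [CharZero K] {g : Aˣ} (hg : g ∈ G) {w : A}
    (hw : (g : A) * w * ↑g⁻¹ = -w) :
    (1 : A) ∈ Submodule.span K (conjugatesBy G (1 + w)) ∧
      w ∈ Submodule.span K (conjugatesBy G (1 + w)) := by
  have hplus : 1 + w ∈ conjugatesBy G (1 + w) := ⟨1, G.one_mem, by simp⟩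
  have hminus : 1 - w ∈ conjugatesBy G (1 + w) :=
    ⟨g, hg, by rw [mul_add, add_mul, mul_one, Units.mul_inv, hw, sub_eq_add_neg]⟩
  have hplus' := Submodule.subset_span (R := K) hplus
  have hminus' := Submodule.subset_span (R := K) hminus
  constructor
  · convert Submodule.smul_mem _ (2⁻¹ : K) (add_mem hplus' hminus') using 1
    module
  · convert Submodule.smul_mem _ (2⁻¹ : K) (sub_mem hplus' hminus') using 1
    module

variable (K) in
def twirl (G : Subgroup Aˣ) [Fintype G] : A →ₗ[K] A :=
  (Fintype.card G : K)⁻¹ •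
    ∑ g : G, LinearMap.mulLeft K ((g : Aˣ) : A) ∘ₗ LinearMap.mulRight K (↑(g : Aˣ)⁻¹ : A)

variable [Fintype G]

theorem twirl_apply (M : A) :
    twirl K G M = (Fintype.card G : K)⁻¹ • ∑ g : G, ((g : Aˣ) : A) * M * ↑(g : Aˣ)⁻¹ := by
  simp [twirl, mul_assoc]

theorem twirl_conj {g : Aˣ} (hg : g ∈ G) (M : A) :
    twirl K G ((g : A) * M * ↑g⁻¹) = twirl K G M := by
  simp only [twirl_apply]
  congr 1
  refine Fintype.sum_equiv (Equiv.mulRight ⟨g, hg⟩) _ _ fun h => ?_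
  simp [mul_assoc]

theorem twirl_mem {S : Submodule K A} {M : A} (hM : ∀ g ∈ G, (g : A) * M * ↑g⁻¹ ∈ S) :
    twirl K G M ∈ S := by
  rw [twirl_apply]
  exact S.smul_mem _ (S.sum_mem fun g _ => hM g g.2)

theorem twirl_eq_self [CharZero K] {M : A} (hM : ∀ g ∈ G, (g : A) * M * ↑g⁻¹ = M) :
    twirl K G M = M := by
  rw [twirl_apply, Finset.sum_congr rfl fun (g : G) _ => hM g g.2, Finset.sum_const,
    Finset.card_univ, ← Nat.cast_smul_eq_nsmul K, smul_smul,
    inv_mul_cancel₀ (Nat.cast_ne_zero.mpr Fintype.card_ne_zero), one_smul]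

theorem twirl_one [CharZero K] : twirl K G (1 : A) = 1 :=
  twirl_eq_self fun g _ => by simp

theorem exists_twirl_eq_smul_one [CharZero K] [Nontrivial A] {M : A}
    (h1 : (1 : A) ∈ Submodule.span K (conjugatesBy G M)) : ∃ μ : K, twirl K G M = μ • 1 := by
  have hspan : Submodule.span K (conjugatesBy G M) ≤ (K ∙ twirl K G M).comap (twirl K G) := by
    rw [Submodule.span_le]
    rintro _ ⟨g, hg, rfl⟩
    simp [twirl_conj hg, Submodule.mem_span_singleton_self]
  have h1' : twirl K G 1 ∈ K ∙ twirl K G M := hspan h1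
  rw [twirl_one] at h1'
  obtain ⟨c, hc⟩ := Submodule.mem_span_singleton.mp h1'
  have hc0 : c ≠ 0 := by rintro rfl; simp at hc
  exact ⟨c⁻¹, by rw [← hc, smul_smul, inv_mul_cancel₀ hc0, one_smul]⟩

theorem span_conjugatesBy_le_range_id_sub_twirl_sup [CharZero K] [Nontrivial A] {M : A}
    (h1 : (1 : A) ∈ Submodule.span K (conjugatesBy G M)) :
    Submodule.span K (conjugatesBy G M) ≤
      LinearMap.range (LinearMap.id - twirl K G) ⊔ (K ∙ (1 : A)) := by
  obtain ⟨μ, hμ⟩ := exists_twirl_eq_smul_one h1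
  rw [Submodule.span_le]
  rintro _ ⟨g, hg, rfl⟩
  set x := (g : A) * M * ↑g⁻¹
  refine Submodule.mem_sup.mpr ⟨x - twirl K G x, ⟨x, rfl⟩, μ • 1,
    Submodule.smul_mem _ _ (Submodule.mem_span_singleton_self _), ?_⟩
  rw [twirl_conj hg, hμ, sub_add_cancel]

end Twirl

section OperatorSystem

variable {m : Type*} [DecidableEq m]

def IsOperatorSystem (S : Submodule ℂ (Matrix m m ℂ)) : Prop :=
  (1 : Matrix m m ℂ) ∈ S ∧ ∀ A ∈ S, Aᴴ ∈ S

theorem isOperatorSystem_span {s : Set (Matrix m m ℂ)} (h1 : 1 ∈ Submodule.span ℂ s)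
    (hs : ∀ x ∈ s, xᴴ = x) : IsOperatorSystem (Submodule.span ℂ s) := by
  refine ⟨h1, fun A hA => ?_⟩
  induction hA using Submodule.span_induction with
  | mem x hx => rw [hs x hx]; exact Submodule.subset_span hx
  | zero => simp
  | add x y _ _ hx hy => rw [conjTranspose_add]; exact add_mem hx hy
  | smul c x _ hx => rw [conjTranspose_smul]; exact Submodule.smul_mem _ _ hx

end OperatorSystem

section PauliSubgroup

variable {n : ℕ}

local notation "𝕄" n:max => Matrix (Fin n → Fin 2) (Fin n → Fin 2) ℂ

def pauliNormalizer (G : Subgroup (𝕄 n)ˣ) : Set (𝕄 n) :=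
  {h ∈ pauliGroupSet n | (fun g => h * g * h⁻¹) '' (Units.val '' (G : Set (𝕄 n)ˣ)) =
    Units.val '' (G : Set (𝕄 n)ˣ)}

variable {G : Subgroup (𝕄 n)ˣ} {g : (𝕄 n)ˣ}

theorem coe_mem_signedPauliWords (hGpauli : ∀ g ∈ G, (g : 𝕄 n) ∈ pauliGroupSet n)
    (hneg : (-1 : (𝕄 n)ˣ) ∉ G) (hg : g ∈ G) : (g : 𝕄 n) ∈ signedPauliWords n := by
  obtain ⟨c, hc, j, hgj⟩ := hGpauli g hg
  rcases hc with rfl | rfl | rfl | rfl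
  · exact ⟨j, Or.inl (by simpa using hgj)⟩
  · exact ⟨j, Or.inr (by simpa using hgj)⟩
  all_goals
    have hsq : g * g = -1 := Units.ext (by simp [hgj, smul_smul, pauliWord_mul_self])
    exact absurd (hsq ▸ mul_mem hg hg) hneg

theorem finite_of_forall_mem_signedPauliWords (hG : ∀ g ∈ G, (g : 𝕄 n) ∈ signedPauliWords n) :
    Finite G :=
  have := signedPauliWords_finite (n := n).to_subtype
  Finite.of_injective (fun g : G => (⟨(g : (𝕄 n)ˣ), hG g g.2⟩ : signedPauliWords n))
    fun _ _ h => Subtype.ext (Units.ext (congrArg Subtype.val h))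

theorem coe_inv_eq_self (hG : ∀ g ∈ G, (g : 𝕄 n) ∈ signedPauliWords n) (hg : g ∈ G) :
    ((g⁻¹ : (𝕄 n)ˣ) : 𝕄 n) = g :=
  Units.inv_eq_of_mul_eq_one_right (mul_self_of_mem_signedPauliWords (hG g hg))

theorem conjugatesBy_eq_setOf_mul_mul (hG : ∀ g ∈ G, (g : 𝕄 n) ∈ signedPauliWords n) (M : 𝕄 n) :
    conjugatesBy G M = {x | ∃ g ∈ G, x = (g : 𝕄 n) * M * g} := by
  ext x
  simp only [conjugatesBy, Set.mem_ofPred_eq]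
  refine exists_congr fun g => and_congr_right fun hg => ?_
  rw [coe_inv_eq_self hG hg]

theorem conjTranspose_eq_self_of_mem_conjugatesBy
    (hG : ∀ g ∈ G, (g : 𝕄 n) ∈ signedPauliWords n) {M : 𝕄 n} (hM : M.IsHermitian) :
    ∀ x ∈ conjugatesBy G M, xᴴ = x := by
  rintro _ ⟨g, hg, rfl⟩
  rw [coe_inv_eq_self hG hg]
  simp [(isHermitian_of_mem_signedPauliWords (hG g hg)).eq, hM.eq, mul_assoc]

theorem conj_pauliWord_eq_or_eq_neg (hG : ∀ g ∈ G, (g : 𝕄 n) ∈ signedPauliWords n)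
    (hg : g ∈ G) (j : Fin n → Fin 4) :
    (g : 𝕄 n) * pauliWord j * (↑g⁻¹ : 𝕄 n) = pauliWord j ∨
      (g : 𝕄 n) * pauliWord j * (↑g⁻¹ : 𝕄 n) = -pauliWord j := by
  rw [coe_inv_eq_self hG hg]
  have hgg := mul_self_of_mem_signedPauliWords (hG g hg)
  rcases commute_or_anticommute_of_mem_signedPauliWords (hG g hg) j with h | h
  · left; rw [h.eq, mul_assoc, hgg, mul_one]
  · right; rw [h, neg_mul, mul_assoc, hgg, mul_one]

theorem mem_pauliNormalizer_of_forall_conj_eq {h : 𝕄 n} (hh : h ∈ pauliGroupSet n)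
    (hc : ∀ g ∈ G, (g : 𝕄 n) * h * (↑g⁻¹ : 𝕄 n) = h) : h ∈ pauliNormalizer G := by
  refine ⟨hh, ?_⟩
  have hdet := (isUnit_iff_isUnit_det h).mp (isUnit_of_mem_pauliGroupSet hh)
  conv_rhs => rw [← Set.image_id (Units.val '' _)]
  refine Set.image_congr ?_
  rintro _ ⟨g, hg, rfl⟩
  have hcomm : (g : 𝕄 n) * h = h * g := by
    conv_rhs => rw [← hc g hg]
    simp [mul_assoc]
  rw [← hcomm, mul_nonsing_inv_cancel_right _ _ hdet, id]

theorem conj_eq_of_pauliWord_mem_pauliNormalizer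
    (hG : ∀ g ∈ G, (g : 𝕄 n) ∈ signedPauliWords n) (hneg : (-1 : (𝕄 n)ˣ) ∉ G)
    {j : Fin n → Fin 4} (hw : pauliWord j ∈ pauliNormalizer G) (hg : g ∈ G) :
    (g : 𝕄 n) * pauliWord j * (↑g⁻¹ : 𝕄 n) = pauliWord j := by
  refine (conj_pauliWord_eq_or_eq_neg hG hg j).resolve_right fun hanti => hneg ?_
  obtain ⟨u, hu, hug⟩ : pauliWord j * g * (pauliWord j)⁻¹ ∈ Units.val '' (G : Set (𝕄 n)ˣ) :=
    hw.2 ▸ ⟨g, ⟨g, hg, rfl⟩, rfl⟩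
  have hgw : (g : 𝕄 n) * pauliWord j = -(pauliWord j * g) := by
    calc (g : 𝕄 n) * pauliWord j = (g : 𝕄 n) * pauliWord j * (↑g⁻¹ : 𝕄 n) * g := by simp [mul_assoc]
      _ = -(pauliWord j * g) := by rw [hanti, neg_mul]
  have hwgw : pauliWord j * g * pauliWord j = -g := by
    rw [mul_assoc, hgw, mul_neg, ← mul_assoc, pauliWord_mul_self, one_mul]
  have hu1 : u * g⁻¹ = -1 := Units.ext <| by
    rw [Units.val_mul, hug, inv_eq_left_inv (pauliWord_mul_self j), hwgw, coe_inv_eq_self hG hg,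
      neg_mul, mul_self_of_mem_signedPauliWords (hG g hg), Units.val_neg, Units.val_one]
  exact hu1 ▸ mul_mem hu (inv_mem hg)

theorem exists_conj_pauliWord_eq_neg_of_smul_mem_sdiff
    (hG : ∀ g ∈ G, (g : 𝕄 n) ∈ signedPauliWords n)
    {c : ℂ} {j : Fin n → Fin 4} (hp : c • pauliWord j ∈ pauliGroupSet n \ pauliNormalizer G) :
    ∃ g ∈ G, (g : 𝕄 n) * pauliWord j * (↑g⁻¹ : 𝕄 n) = -pauliWord j := by
  by_contra! h
  refine hp.2 (mem_pauliNormalizer_of_forall_conj_eq hp.1 fun g hg => ?_)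
  rw [mul_smul_comm, smul_mul_assoc, (conj_pauliWord_eq_or_eq_neg hG hg j).resolve_right (h g hg)]

theorem range_id_sub_twirl_le [Fintype G] (hG : ∀ g ∈ G, (g : 𝕄 n) ∈ signedPauliWords n)
    (hneg : (-1 : (𝕄 n)ˣ) ∉ G) :
    LinearMap.range (LinearMap.id - twirl ℂ G) ≤
      Submodule.span ℂ (pauliGroupSet n \ pauliNormalizer G) := by
  rw [LinearMap.range_eq_map, ← span_range_pauliWord, Submodule.map_span_le]
  rintro _ ⟨j, rfl⟩
  by_cases hw : pauliWord j ∈ pauliNormalizer G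
  · simp [twirl_eq_self fun g hg => conj_eq_of_pauliWord_mem_pauliNormalizer hG hneg hw hg]
  · have hspan : ℂ ∙ pauliWord j ≤ Submodule.span ℂ (pauliGroupSet n \ pauliNormalizer G) :=
      (Submodule.span_singleton_le_iff_mem _ _).mpr
        (Submodule.subset_span ⟨pauliWord_mem_pauliGroupSet j, hw⟩)
    refine hspan (sub_mem (Submodule.mem_span_singleton_self _) (twirl_mem fun g hg => ?_))
    rcases conj_pauliWord_eq_or_eq_neg hG hg j with h | h <;> rw [h]
    exacts [Submodule.mem_span_singleton_self _,
      neg_mem (Submodule.mem_span_singleton_self _)]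

end PauliSubgroup

theorem statement11_general (n : ℕ)
    (G : Subgroup (Matrix (Fin n → Fin 2) (Fin n → Fin 2) ℂ)ˣ)
    (hGpauli : ∀ g ∈ G, (g : Matrix (Fin n → Fin 2) (Fin n → Fin 2) ℂ) ∈ pauliGroupSet n)
    (hneg : (-1 : (Matrix (Fin n → Fin 2) (Fin n → Fin 2) ℂ)ˣ) ∉ G)
    (V : Matrix (Fin n → Fin 2) (Fin n → Fin 2) ℂ →
      Submodule ℂ (Matrix (Fin n → Fin 2) (Fin n → Fin 2) ℂ))
    (hV : ∀ M₀, V M₀ = Submodule.span ℂ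
      {x | ∃ g ∈ G, x = (g : Matrix (Fin n → Fin 2) (Fin n → Fin 2) ℂ) * M₀ *
        (g : Matrix (Fin n → Fin 2) (Fin n → Fin 2) ℂ)})
    (N : Set (Matrix (Fin n → Fin 2) (Fin n → Fin 2) ℂ))
    (hN : N = {h ∈ pauliGroupSet n |
      (fun g => h * g * h⁻¹) ''
          (Units.val '' (G : Set (Matrix (Fin n → Fin 2) (Fin n → Fin 2) ℂ)ˣ))
        = Units.val '' (G : Set (Matrix (Fin n → Fin 2) (Fin n → Fin 2) ℂ)ˣ)}) :
    (⨆ M₀ ∈ {M : Matrix (Fin n → Fin 2) (Fin n → Fin 2) ℂ |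
        (1 : Matrix (Fin n → Fin 2) (Fin n → Fin 2) ℂ) ∈ V M ∧ ∀ A ∈ V M, Aᴴ ∈ V M},
      V M₀) =
    Submodule.span ℂ ((pauliGroupSet n \ N) ∪
      {(1 : Matrix (Fin n → Fin 2) (Fin n → Fin 2) ℂ)}) := by
  subst hN
  have hG : ∀ g ∈ G, (g : Matrix (Fin n → Fin 2) (Fin n → Fin 2) ℂ) ∈ signedPauliWords n :=
    fun g hg => coe_mem_signedPauliWords hGpauli hneg hg
  have := finite_of_forall_mem_signedPauliWords hG
  let := Fintype.ofFinite G
  obtain rfl : V = fun M₀ => Submodule.span ℂ (conjugatesBy G M₀) :=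
    funext fun M₀ => by rw [hV, conjugatesBy_eq_setOf_mul_mul hG]
  apply le_antisymm
  · refine iSup₂_le fun M₀ hM₀ =>
      (span_conjugatesBy_le_range_id_sub_twirl_sup hM₀.1).trans (sup_le ?_ ?_)
    · exact (range_id_sub_twirl_le hG hneg).trans (Submodule.span_mono Set.subset_union_left)
    · exact Submodule.span_mono Set.subset_union_right
  · rw [Submodule.span_le]
    rintro p (hp | rfl)
    · obtain ⟨c, -, j, rfl⟩ := hp.1
      obtain ⟨g, hg, hgw⟩ := exists_conj_pauliWord_eq_neg_of_smul_mem_sdiff hG hp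
      obtain ⟨h1, hw⟩ := one_mem_and_mem_span_conjugatesBy_one_add (K := ℂ) hg hgw
      have hOS := isOperatorSystem_span h1 (conjTranspose_eq_self_of_mem_conjugatesBy hG
        (isHermitian_one.add (pauliWord_isHermitian j)))
      exact Submodule.mem_iSup_of_mem (1 + pauliWord j)
        (Submodule.mem_iSup_of_mem hOS (Submodule.smul_mem _ c hw))
    · have h1 : 1 ∈ Submodule.span ℂ (conjugatesBy G 1) :=
        Submodule.subset_span ⟨1, G.one_mem, by simp⟩
      have hOS := isOperatorSystem_span h1
        (conjTranspose_eq_self_of_mem_conjugatesBy hG isHermitian_one)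
      exact Submodule.mem_iSup_of_mem 1 (Submodule.mem_iSup_of_mem hOS h1)

/-- Theorem 2 of the paper: let `G` be an abelian subgroup of the Pauli
group `𝒫_n` with `−I₂^{⊗n} ∉ G`, and for `M₀ ∈ M_{2^n}(ℂ)` let
`𝒱_{M₀} = span{g M₀ g : g ∈ G}`. Then the linear span (supremum), over all `M₀` for
which `𝒱_{M₀}` contains the identity and is closed under adjoints, of the subspaces
`𝒱_{M₀}`, equals `span((𝒫_n \ N(G)) ∪ {I₂^{⊗n}})`, where
`N(G) = {h ∈ 𝒫_n : h G h⁻¹ = G}` is the normalizer of `G` in `𝒫_n`. -/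
theorem statement11 (n : ℕ)
    (G : Subgroup (Matrix (Fin n → Fin 2) (Fin n → Fin 2) ℂ)ˣ)
    (hGpauli : ∀ g ∈ G, (g : Matrix (Fin n → Fin 2) (Fin n → Fin 2) ℂ) ∈ pauliGroupSet n)
    (hGcomm : ∀ g ∈ G, ∀ h ∈ G, g * h = h * g)
    (hneg : (-1 : (Matrix (Fin n → Fin 2) (Fin n → Fin 2) ℂ)ˣ) ∉ G)
    (V : Matrix (Fin n → Fin 2) (Fin n → Fin 2) ℂ →
      Submodule ℂ (Matrix (Fin n → Fin 2) (Fin n → Fin 2) ℂ))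
    (hV : ∀ M₀, V M₀ = Submodule.span ℂ
      {x | ∃ g ∈ G, x = (g : Matrix (Fin n → Fin 2) (Fin n → Fin 2) ℂ) * M₀ *
        (g : Matrix (Fin n → Fin 2) (Fin n → Fin 2) ℂ)})
    (N : Set (Matrix (Fin n → Fin 2) (Fin n → Fin 2) ℂ))
    (hN : N = {h ∈ pauliGroupSet n |
      (fun g => h * g * h⁻¹) ''
          (Units.val '' (G : Set (Matrix (Fin n → Fin 2) (Fin n → Fin 2) ℂ)ˣ))
        = Units.val '' (G : Set (Matrix (Fin n → Fin 2) (Fin n → Fin 2) ℂ)ˣ)}) :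
    (⨆ M₀ ∈ {M : Matrix (Fin n → Fin 2) (Fin n → Fin 2) ℂ |
        (1 : Matrix (Fin n → Fin 2) (Fin n → Fin 2) ℂ) ∈ V M ∧ ∀ A ∈ V M, Aᴴ ∈ V M},
      V M₀) =
    Submodule.span ℂ ((pauliGroupSet n \ N) ∪
      {(1 : Matrix (Fin n → Fin 2) (Fin n → Fin 2) ℂ)}) :=
  statement11_general n G hGpauli hneg V hV N hN
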